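/- arXiv:2107.07587 — 3 statements merged into one kernel-verified Lean document; each statement's English description precedes it below -/
import Mathlib

section
/- Let Λ be a row-finite, locally-convex k-graph and R a commutative ring with 1. If J is a basic ideal of KP_R(Λ), then I(H(J)) is the largest basic, graded ideal contained in J: I(H(J)) ⊆ J, I(H(J)) is basic and graded, and every basic graded ideal K with K ⊆ J satisfies K ⊆ I(H(J)). -/
open scoped BigOperators

/-- A `k`-graph: a countable small category together with a degree functor
`d : Λ → ℕ^k` satisfying the unique factorization property.  Composition is
a total function which is only meaningful on composable pairs. -/
structure KGraph (k : ℕ) where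
  Obj : Type
  Mor : Type
  obj_countable : Countable Obj
  mor_countable : Countable Mor
  /-- codomain (range) -/
  r : Mor → Obj
  /-- domain (source) -/
  s : Mor → Obj
  /-- identity morphisms (vertices) -/
  id : Obj → Mor
  /-- composition (junk value on non-composable pairs) -/
  comp : Mor → Mor → Mor
  /-- the degree functor -/
  d : Mor → Fin k → ℕ
  r_id : ∀ v, r (id v) = v
  s_id : ∀ v, s (id v) = v
  d_id : ∀ v, d (id v) = 0
  eq_id_of_d_eq_zero : ∀ f, d f = 0 → f = id (r f)
  r_comp : ∀ f g, s f = r g → r (comp f g) = r f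
  s_comp : ∀ f g, s f = r g → s (comp f g) = s g
  d_comp : ∀ f g, s f = r g → d (comp f g) = d f + d g
  id_comp : ∀ f, comp (id (r f)) f = f
  comp_id : ∀ f, comp f (id (s f)) = f
  comp_assoc : ∀ f g h, s f = r g → s g = r h →
    comp (comp f g) h = comp f (comp g h)
  /-- the unique factorization property -/
  factor : ∀ f (m n : Fin k → ℕ), d f = m + n →
    ∃! p : Mor × Mor, s p.1 = r p.2 ∧ d p.1 = m ∧ d p.2 = n ∧ f = comp p.1 p.2

namespace KGraph

variable {k : ℕ} (Λ : KGraph k)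

/-- `vΛ^m` : the morphisms with range `v` and degree `m`. -/
def vSet (v : Λ.Obj) (m : Fin k → ℕ) : Set Λ.Mor :=
  {f | Λ.r f = v ∧ Λ.d f = m}

/-- `Λ` is row-finite if each `vΛ^m` is finite. -/
def RowFinite : Prop := ∀ (v : Λ.Obj) (m : Fin k → ℕ), (Λ.vSet v m).Finite

/-- `Λ` is locally-convex. -/
def LocallyConvex : Prop :=
  ∀ (v : Λ.Obj) (i j : Fin k), i ≠ j →
    ∀ f ∈ Λ.vSet v (Pi.single i 1), ∀ g ∈ Λ.vSet v (Pi.single j 1),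
      (Λ.vSet (Λ.s f) (Pi.single j 1)).Nonempty ∧
      (Λ.vSet (Λ.s g) (Pi.single i 1)).Nonempty

/-- `(Λ \ H)^{≤ n}`, the set `Λ^{≤n}` computed in the subgraph obtained by removing the
vertices of `H`.  Taking `H = ∅` gives `Λ^{≤ n}` itself. -/
def pathsLeIn (H : Set Λ.Obj) (n : Fin k → ℕ) : Set Λ.Mor :=
  {f | Λ.r f ∉ H ∧ Λ.s f ∉ H ∧ (∀ i, Λ.d f i ≤ n i) ∧
    ∀ i, Λ.d f i < n i →
      {g : Λ.Mor | Λ.r g = Λ.s f ∧ Λ.d g = Pi.single i 1 ∧ Λ.s g ∉ H} = ∅}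

/-- `Λ^{≤ n}`. -/
def pathsLe (n : Fin k → ℕ) : Set Λ.Mor := Λ.pathsLeIn ∅ n

/-- `vΛ^{≤ n}`. -/
def vPathsLe (v : Λ.Obj) (n : Fin k → ℕ) : Set Λ.Mor :=
  {f ∈ Λ.pathsLe n | Λ.r f = v}

/-- A set of vertices is hereditary if it is closed under taking sources of paths. -/
def Hereditary (H : Set Λ.Obj) : Prop := ∀ f : Λ.Mor, Λ.r f ∈ H → Λ.s f ∈ H

/-- A set of vertices is saturated. -/
def Saturated (H : Set Λ.Obj) : Prop :=
  ∀ v : Λ.Obj, (∃ i : Fin k, ∀ f ∈ Λ.vPathsLe v (Pi.single i 1), Λ.s f ∈ H) → v ∈ H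

/-- `T(w)` : the set of sources of paths with range `w`. -/
def Tset (w : Λ.Obj) : Set Λ.Obj := {u | ∃ f : Λ.Mor, Λ.r f = w ∧ Λ.s f = u}

end KGraph

/-- The annihilator `J^⊥ = {a | ax = xa = 0 for all x ∈ J}` of a two-sided ideal,
as a two-sided ideal. -/
def TwoSidedIdeal.annihilator {A : Type*} [Ring A] (J : TwoSidedIdeal A) :
    TwoSidedIdeal A :=
  TwoSidedIdeal.mk' {a : A | ∀ x ∈ J, a * x = 0 ∧ x * a = 0}
    (fun x hx => by simp)
    (fun {a b} ha hb x hx => by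
      rw [add_mul, mul_add, (ha x hx).1, (ha x hx).2, (hb x hx).1, (hb x hx).2]
      simp)
    (fun {a} ha x hx => by
      rw [neg_mul, mul_neg, (ha x hx).1, (ha x hx).2]; simp)
    (fun {a b} hb x hx => by
      constructor
      · rw [mul_assoc, (hb x hx).1, mul_zero]
      · have : x * a ∈ J := J.mul_mem_right _ _ hx
        rw [← mul_assoc, (hb _ this).2])
    (fun {a b} ha x hx => by
      constructor
      · have : b * x ∈ J := J.mul_mem_left _ _ hx
        rw [mul_assoc, (ha _ this).1]
      · rw [← mul_assoc, (ha x hx).2, zero_mul])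

lemma TwoSidedIdeal.mem_annihilator {A : Type*} [Ring A] (J : TwoSidedIdeal A) (a : A) :
    a ∈ J.annihilator ↔ ∀ x ∈ J, a * x = 0 ∧ x * a = 0 := by
  simp [TwoSidedIdeal.annihilator]

/-- An ideal is regular if it equals its double annihilator. -/
def TwoSidedIdeal.IsRegular {A : Type*} [Ring A] (J : TwoSidedIdeal A) : Prop :=
  J.annihilator.annihilator = J

section KumjianPask

variable {k : ℕ}

/-- A Kumjian–Pask `Λ`-family in an `R`-algebra `A`.  Here `S` is defined on all of
`Λ`, with `S` of a vertex equal to the corresponding idempotent `P`, and `Sstar`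
encodes the ghost paths. -/
structure KPFamily (Λ : KGraph k) (R : Type*) [CommRing R]
    (A : Type*) [Ring A] [Algebra R A] where
  P : Λ.Obj → A
  S : Λ.Mor → A
  Sstar : Λ.Mor → A
  S_id : ∀ v, S (Λ.id v) = P v
  Sstar_id : ∀ v, Sstar (Λ.id v) = P v
  kp1_idem : ∀ v, P v * P v = P v
  kp1_orth : ∀ u v, u ≠ v → P u * P v = 0
  kp2_comp : ∀ f g, Λ.s f = Λ.r g → S f * S g = S (Λ.comp f g)
  kp2_comp_star : ∀ f g, Λ.s f = Λ.r g → Sstar g * Sstar f = Sstar (Λ.comp f g)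
  kp2_r : ∀ f, P (Λ.r f) * S f = S f
  kp2_s : ∀ f, S f * P (Λ.s f) = S f
  kp2_star_s : ∀ f, P (Λ.s f) * Sstar f = Sstar f
  kp2_star_r : ∀ f, Sstar f * P (Λ.r f) = Sstar f
  kp3_eq : ∀ (n : Fin k → ℕ), n ≠ 0 → ∀ f ∈ Λ.pathsLe n,
    Sstar f * S f = P (Λ.s f)
  kp3_ne : ∀ (n : Fin k → ℕ), n ≠ 0 → ∀ f ∈ Λ.pathsLe n, ∀ g ∈ Λ.pathsLe n,
    f ≠ g → Sstar f * S g = 0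
  kp4 : ∀ (v : Λ.Obj) (n : Fin k → ℕ), n ≠ 0 →
    ∀ (hfin : (Λ.vPathsLe v n).Finite),
      P v = ∑ f ∈ hfin.toFinset, S f * Sstar f

universe w

/-- `A`, equipped with the Kumjian–Pask `Λ`-family `F`, is the Kumjian–Pask algebra
`KP_R(Λ)`: it satisfies the universal property, and `r • p_v ≠ 0` for `r ≠ 0`. -/
def IsKPAlgebra (Λ : KGraph k) (R : Type*) [CommRing R]
    (A : Type*) [Ring A] [Algebra R A] (F : KPFamily Λ R A) : Prop :=
  (∀ (B : Type w) [Ring B] [Algebra R B] (G : KPFamily Λ R B),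
    ∃! π : A →ₐ[R] B,
      (∀ v, π (F.P v) = G.P v) ∧ (∀ f, π (F.S f) = G.S f) ∧
      (∀ f, π (F.Sstar f) = G.Sstar f)) ∧
  (∀ r : R, r ≠ 0 → ∀ v : Λ.Obj, r • F.P v ≠ 0)

namespace KPFamily

variable {Λ : KGraph k} {R : Type*} [CommRing R] {A : Type*} [Ring A] [Algebra R A]
variable (F : KPFamily Λ R A)

/-- The homogeneous component `KP_R(Λ)_n = span_R { s_α s_{β*} : d(α) - d(β) = n }`. -/
def component (n : Fin k → ℤ) : Submodule R A :=
  Submodule.span R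
    {x : A | ∃ α β : Λ.Mor, (∀ i, (Λ.d α i : ℤ) - (Λ.d β i : ℤ) = n i) ∧
      x = F.S α * F.Sstar β}

/-- An ideal is graded when it is spanned by its homogeneous elements. -/
def IsGradedIdeal (J : TwoSidedIdeal A) : Prop :=
  ∀ a ∈ J, a ∈ TwoSidedIdeal.span
    {x : A | x ∈ J ∧ ∃ n : Fin k → ℤ, x ∈ F.component n}

/-- An ideal is basic if `r • p_v ∈ J` for `r ≠ 0` implies `p_v ∈ J`. -/
def IsBasicIdeal (J : TwoSidedIdeal A) : Prop :=
  ∀ (r : R) (v : Λ.Obj), r ≠ 0 → r • F.P v ∈ J → F.P v ∈ J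

/-- `H(I) = { v : p_v ∈ I }`. -/
def HSet (I : TwoSidedIdeal A) : Set Λ.Obj := {v | F.P v ∈ I}

/-- `H̄(I) = { r(λ) : λ ∈ Λ, s(λ) ∈ H(I) }`. -/
def HbarSet (I : TwoSidedIdeal A) : Set Λ.Obj :=
  {w | ∃ f : Λ.Mor, Λ.r f = w ∧ Λ.s f ∈ F.HSet I}

/-- `I(H)`: the (two-sided) ideal generated by the vertex idempotents of `H`. -/
def idealOf (H : Set Λ.Obj) : TwoSidedIdeal A :=
  TwoSidedIdeal.span (F.P '' H)

end KPFamily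

end KumjianPask

section Aux

attribute [local instance] Classical.propDecidable

lemma TwoSidedIdeal.span_le'' {A : Type*} [NonUnitalNonAssocRing A] {s : Set A}
    {I : TwoSidedIdeal A} (h : s ⊆ I) : TwoSidedIdeal.span s ≤ I :=
  fun _ hx => TwoSidedIdeal.mem_span_iff.mp hx I h

variable {k : ℕ} {Λ : KGraph k}

/-- Row-finiteness implies each `vΛ^{≤ n}` is finite. -/
lemma KGraph.vPathsLe_finite (hrf : Λ.RowFinite) (v : Λ.Obj) (n : Fin k → ℕ) :
    (Λ.vPathsLe v n).Finite := by
  have hidx : {m : Fin k → ℕ | ∀ i, m i ≤ n i}.Finite := by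
    have : {m : Fin k → ℕ | ∀ i, m i ≤ n i} =
        Set.pi Set.univ (fun i => Set.Iic (n i)) := by
      ext m; simp [Set.mem_pi, Set.mem_Iic, Pi.le_def]
    rw [this]
    exact Set.Finite.pi fun i => Set.finite_Iic _
  refine Set.Finite.subset (Set.Finite.biUnion hidx (fun m _ => hrf v m)) ?_
  intro f hf
  obtain ⟨hf1, hf2⟩ := hf
  obtain ⟨-, -, hle, -⟩ := hf1
  exact Set.mem_biUnion hle ⟨hf2, rfl⟩

/-- Extending a path in `vΛ^{≤ m}` gives a path in `Λ^{≤ (d α + m)}`. -/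
lemma KGraph.comp_mem_pathsLe (α γ : Λ.Mor) (m N : Fin k → ℕ)
    (hγ : γ ∈ Λ.vPathsLe (Λ.s α) m) (hN : ∀ i, Λ.d α i + m i = N i) :
    Λ.comp α γ ∈ Λ.pathsLe N := by
  obtain ⟨hγp, hγr⟩ := hγ
  obtain ⟨-, -, hle, hext⟩ := hγp
  have hc : Λ.s α = Λ.r γ := hγr.symm
  refine ⟨Set.notMem_empty _, Set.notMem_empty _, ?_, ?_⟩
  · intro i
    rw [Λ.d_comp _ _ hc]
    have := hle i
    have := hN i
    simp only [Pi.add_apply]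
    omega
  · intro i hi
    rw [Λ.d_comp _ _ hc] at hi
    simp only [Pi.add_apply] at hi
    have hlt : Λ.d γ i < m i := by have := hN i; omega
    rw [Λ.s_comp _ _ hc]
    exact hext i hlt

namespace KPFamily

variable {R : Type*} [CommRing R] {A : Type*} [Ring A] [Algebra R A]
variable (F : KPFamily Λ R A)

lemma S_mul_Sstar_of_src_ne (α β : Λ.Mor) (h : Λ.s α ≠ Λ.s β) :
    F.S α * F.Sstar β = 0 := by
  conv_lhs => rw [← F.kp2_s α, ← F.kp2_star_s β]
  rw [mul_assoc, ← mul_assoc (F.P (Λ.s α)), F.kp1_orth _ _ h, zero_mul, mul_zero]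

lemma kp3' (n : Fin k → ℕ) (hn : n ≠ 0) (f g : Λ.Mor)
    (hf : f ∈ Λ.pathsLe n) (hg : g ∈ Λ.pathsLe n) :
    F.Sstar f * F.S g = if g = f then F.P (Λ.s f) else 0 := by
  by_cases h : g = f
  · subst h; rw [if_pos rfl]; exact F.kp3_eq n hn g hg
  · rw [if_neg h]; exact F.kp3_ne n hn f hf g hg (fun e => h e.symm)

lemma expand (α β : Λ.Mor) (m : Fin k → ℕ) (hm : m ≠ 0)
    (hfin : (Λ.vPathsLe (Λ.s α) m).Finite) (hs : Λ.s α = Λ.s β) :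
    F.S α * F.Sstar β =
      ∑ γ ∈ hfin.toFinset, F.S (Λ.comp α γ) * F.Sstar (Λ.comp β γ) := by
  conv_lhs => rw [← F.kp2_s α]
  rw [F.kp4 (Λ.s α) m hm hfin, Finset.mul_sum, Finset.sum_mul]
  refine Finset.sum_congr rfl fun γ hγ => ?_
  have hγ' := hfin.mem_toFinset.mp hγ
  have hrγ : Λ.s α = Λ.r γ := hγ'.2.symm
  have hrγβ : Λ.s β = Λ.r γ := hs ▸ hrγ
  rw [← mul_assoc, F.kp2_comp α γ hrγ, mul_assoc, F.kp2_comp_star β γ hrγβ]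

/-- The extraction lemma: a sum of "matrix-unit like" monomials lying in a basic
ideal `K` lies in the ideal generated by the vertex idempotents of `H(K)`. -/
lemma extraction {ι : Type*} (K : TwoSidedIdeal A) (hKb : F.IsBasicIdeal K)
    (T : Finset ι) (c : ι → R) (l m : ι → Λ.Mor)
    (horth : ∀ j ∈ T, ∀ j' ∈ T,
      F.Sstar (l j') * (F.S (l j) * F.Sstar (m j)) * F.S (m j') =
        if l j = l j' ∧ m j = m j' then F.P (Λ.s (l j')) else 0)
    (hmem : ∑ j ∈ T, c j • (F.S (l j) * F.Sstar (m j)) ∈ K) :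
    ∑ j ∈ T, c j • (F.S (l j) * F.Sstar (m j)) ∈ F.idealOf (F.HSet K) := by
  classical
  set g : ι → Λ.Mor × Λ.Mor := fun j => (l j, m j) with hg
  set T' : Finset (Λ.Mor × Λ.Mor) := T.image g with hT'
  set r' : Λ.Mor × Λ.Mor → R := fun p => ∑ j ∈ T.filter (fun j => g j = p), c j with hr'
  have hx : ∑ j ∈ T, c j • (F.S (l j) * F.Sstar (m j))
      = ∑ p ∈ T', r' p • (F.S p.1 * F.Sstar p.2) := by
    rw [← Finset.sum_fiberwise_of_maps_to (fun j hj => Finset.mem_image_of_mem g hj)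
      (fun j => c j • (F.S (l j) * F.Sstar (m j)))]
    refine Finset.sum_congr rfl fun p hp => ?_
    simp only [hr']; rw [Finset.sum_smul]
    refine Finset.sum_congr rfl fun j hj => ?_
    have hgj : g j = p := (Finset.mem_filter.mp hj).2
    rw [← hgj]
  rw [hx] at hmem ⊢
  refine sum_mem fun p hp => ?_
  by_cases hrp : r' p = 0
  · rw [hrp, zero_smul]; exact zero_mem _
  · have key : F.Sstar p.1 * (∑ q ∈ T', r' q • (F.S q.1 * F.Sstar q.2)) * F.S p.2
        = r' p • F.P (Λ.s p.1) := by
      rw [Finset.mul_sum, Finset.sum_mul]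
      have hterm : ∀ q ∈ T', F.Sstar p.1 * (r' q • (F.S q.1 * F.Sstar q.2)) * F.S p.2
          = if q = p then r' q • F.P (Λ.s p.1) else 0 := by
        intro q hq
        obtain ⟨j, hj, hgj⟩ := Finset.mem_image.mp hq
        obtain ⟨j', hj', hgj'⟩ := Finset.mem_image.mp hp
        have h1 : l j = q.1 := congrArg Prod.fst hgj
        have h2 : m j = q.2 := congrArg Prod.snd hgj
        have h3 : l j' = p.1 := congrArg Prod.fst hgj'
        have h4 : m j' = p.2 := congrArg Prod.snd hgj'
        have horth' := horth j hj j' hj'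
        rw [h1, h2, h3, h4] at horth'
        rw [mul_smul_comm, smul_mul_assoc, horth']
        by_cases hqp : q = p
        · rw [if_pos ⟨(congrArg Prod.fst hqp), (congrArg Prod.snd hqp)⟩, if_pos hqp]
        · rw [if_neg (fun hc => hqp (Prod.ext hc.1 hc.2)), if_neg hqp, smul_zero]
      calc ∑ q ∈ T', F.Sstar p.1 * (r' q • (F.S q.1 * F.Sstar q.2)) * F.S p.2
          = ∑ q ∈ T', if q = p then r' q • F.P (Λ.s p.1) else 0 :=
            Finset.sum_congr rfl hterm
        _ = r' p • F.P (Λ.s p.1) := by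
            rw [Finset.sum_ite_eq' T' p (fun q => r' q • F.P (Λ.s p.1)), if_pos hp]
    have hPK : F.P (Λ.s p.1) ∈ K :=
      hKb (r' p) (Λ.s p.1) hrp
        (key ▸ K.mul_mem_right _ _ (K.mul_mem_left _ _ hmem))
    have hPI : F.P (Λ.s p.1) ∈ F.idealOf (F.HSet K) :=
      TwoSidedIdeal.subset_span ⟨Λ.s p.1, hPK, rfl⟩
    have hrw : F.S p.1 * F.Sstar p.2 = F.S p.1 * (F.P (Λ.s p.1) * F.Sstar p.2) := by
      rw [← mul_assoc, F.kp2_s]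
    rw [hrw, Algebra.smul_def]
    exact (F.idealOf (F.HSet K)).mul_mem_left _ _
      ((F.idealOf (F.HSet K)).mul_mem_left _ _
        ((F.idealOf (F.HSet K)).mul_mem_right _ _ hPI))

/-- Every homogeneous element of a basic ideal `K` lies in `I(H(K))`. -/
lemma homog_mem (hrf : Λ.RowFinite) (K : TwoSidedIdeal A) (hKb : F.IsBasicIdeal K)
    (n : Fin k → ℤ) (x : A) (hxc : x ∈ F.component n) (hxK : x ∈ K) :
    x ∈ F.idealOf (F.HSet K) := by
  classical
  obtain ⟨nn, c, g, hsum⟩ := Submodule.mem_span_set'.mp hxc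
  choose α β hmono using fun j => (g j).2
  have hd : ∀ j, ∀ i, (Λ.d (α j) i : ℤ) - (Λ.d (β j) i : ℤ) = n i := fun j => (hmono j).1
  have hval : ∀ j, (g j : A) = F.S (α j) * F.Sstar (β j) := fun j => (hmono j).2
  have hx : x = ∑ j : Fin nn, c j • (F.S (α j) * F.Sstar (β j)) := by
    rw [← hsum]
    exact Finset.sum_congr rfl fun j _ => by rw [hval]
  set T0 : Finset (Fin nn) :=
    Finset.univ.filter (fun j => Λ.s (α j) = Λ.s (β j)) with hT0
  have hx0 : x = ∑ j ∈ T0, c j • (F.S (α j) * F.Sstar (β j)) := by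
    rw [hx]
    refine (Finset.sum_filter_of_ne fun j _ hne => ?_).symm
    by_contra hsne
    exact hne (by rw [F.S_mul_Sstar_of_src_ne (α j) (β j) hsne, smul_zero])
  have hsrc : ∀ j ∈ T0, Λ.s (α j) = Λ.s (β j) :=
    fun j hj => (Finset.mem_filter.mp hj).2
  rcases isEmpty_or_nonempty (Fin k) with hk | hk
  · -- `k = 0` : all morphisms are identities
    have hid : ∀ j ∈ T0, α j = Λ.id (Λ.s (α j)) ∧ β j = Λ.id (Λ.s (α j)) := by
      intro j hj
      have hdα : Λ.d (α j) = 0 := funext fun i => hk.elim i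
      have hdβ : Λ.d (β j) = 0 := funext fun i => hk.elim i
      have hα : α j = Λ.id (Λ.r (α j)) := Λ.eq_id_of_d_eq_zero _ hdα
      have hβ : β j = Λ.id (Λ.r (β j)) := Λ.eq_id_of_d_eq_zero _ hdβ
      have hsα : Λ.s (α j) = Λ.r (α j) := by rw [hα, Λ.s_id, Λ.r_id]
      have hsβ : Λ.s (β j) = Λ.r (β j) := by rw [hβ, Λ.s_id, Λ.r_id]
      constructor
      · rw [hsα]; exact hα
      · rw [hsrc j hj, hsβ]; exact hβ
    rw [hx0] at hxK ⊢
    refine F.extraction K hKb T0 c α β ?_ hxK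
    intro j hj j' hj'
    obtain ⟨hαj, hβj⟩ := hid j hj
    obtain ⟨hαj', hβj'⟩ := hid j' hj'
    rw [hαj, hβj, hαj', hβj', F.S_id, F.Sstar_id, F.S_id, F.Sstar_id]
    by_cases huu : Λ.s (α j) = Λ.s (α j')
    · rw [huu, if_pos ⟨rfl, rfl⟩, Λ.s_id, F.kp1_idem, F.kp1_idem, F.kp1_idem]
    · have hcond : ¬(Λ.id (Λ.s (α j)) = Λ.id (Λ.s (α j')) ∧
          Λ.id (Λ.s (α j)) = Λ.id (Λ.s (α j'))) := by
        rintro ⟨h, -⟩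
        exact huu (by rw [← Λ.s_id (Λ.s (α j)), ← Λ.s_id (Λ.s (α j')), h])
      rw [if_neg hcond, F.kp1_idem, F.kp1_orth _ _ (Ne.symm huu), zero_mul]
  · -- `k ≥ 1`
    rcases Finset.eq_empty_or_nonempty T0 with hT0e | ⟨j0, hj0⟩
    · rw [hx0, hT0e, Finset.sum_empty]; exact zero_mem _
    · set N : Fin k → ℕ := fun i => (T0.sup fun j => Λ.d (α j) i) + 1 with hN
      have hNlt : ∀ j ∈ T0, ∀ i, Λ.d (α j) i < N i := fun j hj i =>
        Nat.lt_succ_of_le (Finset.le_sup (f := fun j => Λ.d (α j) i) hj)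
      set m : Fin nn → Fin k → ℕ := fun j i => N i - Λ.d (α j) i with hm
      have hmne : ∀ j ∈ T0, m j ≠ 0 := by
        intro j hj h0
        have h1 := congrFun h0 hk.some
        have h2 := hNlt j hj hk.some
        simp only [hm, Pi.zero_apply] at h1
        omega
      set M : Fin k → ℕ := fun i => Λ.d (β j0) i + (N i - Λ.d (α j0) i) with hM
      have hMeq : ∀ j ∈ T0, ∀ i, Λ.d (β j) i + m j i = M i := by
        intro j hj i
        have h1 := hd j i
        have h2 := hd j0 i
        have l1 := (hNlt j hj i).le
        have l2 := (hNlt j0 hj0 i).le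
        simp only [hm, hM]
        omega
      have hMne : M ≠ 0 := by
        intro h0
        have h1 := congrFun h0 hk.some
        have h2 := hNlt j0 hj0 hk.some
        simp only [hM, Pi.zero_apply] at h1
        omega
      have hNne : N ≠ 0 := by
        intro h0
        have h1 := congrFun h0 hk.some
        simp only [hN, Pi.zero_apply] at h1
        omega
      have hfin : ∀ j, (Λ.vPathsLe (Λ.s (α j)) (m j)).Finite :=
        fun j => KGraph.vPathsLe_finite hrf _ _
      have hx1 : x = ∑ p ∈ T0.sigma (fun j => (hfin j).toFinset),
          c p.1 • (F.S (Λ.comp (α p.1) p.2) * F.Sstar (Λ.comp (β p.1) p.2)) := by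
        rw [hx0, Finset.sum_sigma]
        refine Finset.sum_congr rfl fun j hj => ?_
        rw [F.expand (α j) (β j) (m j) (hmne j hj) (hfin j) (hsrc j hj),
          Finset.smul_sum]
      rw [hx1] at hxK ⊢
      refine F.extraction K hKb _ _ _ _ ?_ hxK
      intro p hp p' hp'
      obtain ⟨hpj, hpγ⟩ := Finset.mem_sigma.mp hp
      obtain ⟨hpj', hpγ'⟩ := Finset.mem_sigma.mp hp'
      have hγ := (hfin p.1).mem_toFinset.mp hpγ
      have hγ' := (hfin p'.1).mem_toFinset.mp hpγ'
      have hla : Λ.comp (α p.1) p.2 ∈ Λ.pathsLe N :=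
        Λ.comp_mem_pathsLe _ _ _ _ hγ
          (fun i => Nat.add_sub_cancel' (hNlt _ hpj i).le)
      have hla' : Λ.comp (α p'.1) p'.2 ∈ Λ.pathsLe N :=
        Λ.comp_mem_pathsLe _ _ _ _ hγ'
          (fun i => Nat.add_sub_cancel' (hNlt _ hpj' i).le)
      have hγβ : p.2 ∈ Λ.vPathsLe (Λ.s (β p.1)) (m p.1) := hsrc p.1 hpj ▸ hγ
      have hγβ' : p'.2 ∈ Λ.vPathsLe (Λ.s (β p'.1)) (m p'.1) := hsrc p'.1 hpj' ▸ hγ'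
      have hlb : Λ.comp (β p.1) p.2 ∈ Λ.pathsLe M :=
        Λ.comp_mem_pathsLe _ _ _ _ hγβ (hMeq _ hpj)
      have hlb' : Λ.comp (β p'.1) p'.2 ∈ Λ.pathsLe M :=
        Λ.comp_mem_pathsLe _ _ _ _ hγβ' (hMeq _ hpj')
      have hsa : Λ.s (Λ.comp (α p.1) p.2) = Λ.s p.2 := Λ.s_comp _ _ hγ.2.symm
      have hsb : Λ.s (Λ.comp (β p.1) p.2) = Λ.s p.2 := by
        have : Λ.s (β p.1) = Λ.r p.2 := by rw [← hsrc p.1 hpj]; exact hγ.2.symm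
        exact Λ.s_comp _ _ this
      set a := Λ.comp (α p.1) p.2
      set b := Λ.comp (β p.1) p.2
      set a' := Λ.comp (α p'.1) p'.2
      set b' := Λ.comp (β p'.1) p'.2
      have hassoc : F.Sstar a' * (F.S a * F.Sstar b) * F.S b'
          = (F.Sstar a' * F.S a) * (F.Sstar b * F.S b') := by
        simp only [mul_assoc]
      rw [hassoc, F.kp3' N hNne a' a hla' hla, F.kp3' M hMne b b' hlb hlb']
      by_cases h1 : a = a'
      · by_cases h2 : b = b'
        · rw [if_pos h1, if_pos h2.symm, if_pos ⟨h1, h2⟩]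
          have : Λ.s b = Λ.s a' := by rw [hsb, ← h1, hsa]
          rw [this, F.kp1_idem]
        · rw [if_pos h1, if_neg (fun e : _ = _ => h2 e.symm), mul_zero,
            if_neg (fun hc : _ ∧ _ => h2 hc.2)]
      · rw [if_neg h1, zero_mul, if_neg (fun hc : _ ∧ _ => h1 hc.1)]

end KPFamily

end Aux

/-- For a basic ideal `J` of `KP_R(Λ)`, `I(H(J))` is the largest
basic graded ideal contained in `J`. -/
theorem idealOf_hSet_largest_basic_graded
    {k : ℕ} (Λ : KGraph k) (hrf : Λ.RowFinite) (hlc : Λ.LocallyConvex)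
    (R : Type) [CommRing R] (A : Type) [Ring A] [Algebra R A]
    (F : KPFamily Λ R A) (hA : IsKPAlgebra Λ R A F)
    (J : TwoSidedIdeal A) (hJb : F.IsBasicIdeal J) :
    F.idealOf (F.HSet J) ≤ J ∧
    F.IsBasicIdeal (F.idealOf (F.HSet J)) ∧
    F.IsGradedIdeal (F.idealOf (F.HSet J)) ∧
    ∀ K : TwoSidedIdeal A, F.IsBasicIdeal K → F.IsGradedIdeal K → K ≤ J →
      K ≤ F.idealOf (F.HSet J) := by
  classical
  have h1 : F.idealOf (F.HSet J) ≤ J := by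
    refine TwoSidedIdeal.span_le'' ?_
    rintro _ ⟨v, hv, rfl⟩
    exact hv
  refine ⟨h1, ?_, ?_, ?_⟩
  · -- basic
    intro r v hr hrv
    have hPJ : F.P v ∈ J := hJb r v hr (h1 hrv)
    exact TwoSidedIdeal.subset_span ⟨v, hPJ, rfl⟩
  · -- graded
    intro a ha
    refine TwoSidedIdeal.mem_span_iff.mp ha _ ?_
    rintro _ ⟨v, hv, rfl⟩
    refine TwoSidedIdeal.subset_span ⟨TwoSidedIdeal.subset_span ⟨v, hv, rfl⟩, 0, ?_⟩
    refine Submodule.subset_span ⟨Λ.id v, Λ.id v, fun i => sub_self _, ?_⟩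
    rw [F.S_id, F.Sstar_id, F.kp1_idem]
  · -- largest
    intro K hKb hKg hKJ a ha
    have ha' := hKg a ha
    refine TwoSidedIdeal.mem_span_iff.mp ha' _ ?_
    rintro x ⟨hxK, n, hxc⟩
    have hxI : x ∈ F.idealOf (F.HSet K) := F.homog_mem hrf K hKb n x hxc hxK
    refine TwoSidedIdeal.mem_span_iff.mp hxI _ ?_
    rintro _ ⟨v, hvK, rfl⟩
    exact TwoSidedIdeal.subset_span ⟨v, hKJ hvK, rfl⟩
end

section
/- Let Λ be a row-finite, locally-convex k-graph and R a commutative ring with 1. Let I be a basic graded ideal of KP_R(Λ), and let (q,t) and (p,m) be the universal Kumjian–Pask families in KP_R(Λ \ H(I)) and KP_R(Λ), respectively. Then there exists an R-algebra isomorphism π : KP_R(Λ \ H(I)) → KP_R(Λ)/I such that π(q_v) = p_v + I, π(t_λ) = m_λ + I, and π(t_{μ*}) = m_{μ*} + I for all vertices v ∈ Λ^0 \ H(I) and all paths λ, μ with source in Λ^0 \ H(I). -/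
open scoped BigOperators

section Restriction

/-- An identification of the `k`-graph `Λ'` with the subgraph `Λ \ H` of `Λ`:
an isomorphism of `Λ'` onto the subcategory of `Λ` whose objects are `Λ⁰ \ H` and
whose morphisms are the paths with range and source outside `H`, compatible with
the degree functors. -/
structure RestrictionIso {k : ℕ} (Λ' Λ : KGraph k) (H : Set Λ.Obj) where
  objMap : Λ'.Obj → Λ.Obj
  morMap : Λ'.Mor → Λ.Mor
  objMap_injective : Function.Injective objMap
  morMap_injective : Function.Injective morMap
  objMap_range : Set.range objMap = Hᶜ
  morMap_range : Set.range morMap = {f : Λ.Mor | Λ.r f ∉ H ∧ Λ.s f ∉ H}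
  map_r : ∀ f, Λ.r (morMap f) = objMap (Λ'.r f)
  map_s : ∀ f, Λ.s (morMap f) = objMap (Λ'.s f)
  map_d : ∀ f, Λ.d (morMap f) = Λ'.d f
  map_id : ∀ v, morMap (Λ'.id v) = Λ.id (objMap v)
  map_comp : ∀ f g, Λ'.s f = Λ'.r g →
    morMap (Λ'.comp f g) = Λ.comp (morMap f) (morMap g)

end Restriction

/-!
Write `H = H(I)`; it is hereditary and saturated. Extending the universal family of `Λ \ H` by
zero gives a Kumjian–Pask `Λ`-family, hence `ψ : KP_R(Λ) → KP_R(Λ \ H)`. Restricting the image of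
the universal `Λ`-family in `KP_R(Λ)/I` gives a `Λ \ H`-family, hence `π : KP_R(Λ \ H) → KP_R(Λ)/I`,
and uniqueness in the universal properties gives `π ∘ ψ = (A → A/I)`, so `ker ψ ⊆ I`, and makes the
map `A/I → KP_R(Λ \ H)` induced by `ψ` a left inverse of `π`, so `ψ` is onto.

For `I ⊆ ker ψ` it suffices, `I` being graded, to treat a homogeneous `x ∈ I`. Expanding with (KP4)
writes `x = ∑ c_{μν} s_μ s_{ν*}` with all `μ ∈ Λ^{≤N}`, all `ν ∈ Λ^{≤M}`, so (KP3) extracts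
`s_{μ*} x s_ν = c_{μν} p_{s(μ)} ∈ I`. As `I` is basic, `c_{μν} ≠ 0` forces `s(μ) ∈ H`, where `ψ`
vanishes.
-/

namespace KGraph

variable {k : ℕ}

def pairsOfDegree (Λ : KGraph k) (n : Fin k → ℤ) : Set (Λ.Mor × Λ.Mor) :=
  {q | ∀ i, (Λ.d q.1 i : ℤ) - Λ.d q.2 i = n i}

def pathsLePairs (Λ : KGraph k) (N M : Fin k → ℕ) : Set (Λ.Mor × Λ.Mor) :=
  {q | q.1 ∈ Λ.pathsLe N ∧ q.2 ∈ Λ.pathsLe M ∧ Λ.s q.1 = Λ.s q.2}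

variable {Λ : KGraph k}

lemma mem_pathsLe {f : Λ.Mor} {n : Fin k → ℕ} :
    f ∈ Λ.pathsLe n ↔ Λ.d f ≤ n ∧
      ∀ i, Λ.d f i < n i → ∀ g : Λ.Mor, ¬(Λ.r g = Λ.s f ∧ Λ.d g = Pi.single i 1) := by
  simp [pathsLe, pathsLeIn, Set.eq_empty_iff_forall_notMem, Pi.le_def]

lemma eq_id_of_mem_pathsLe_zero {f : Λ.Mor} (hf : f ∈ Λ.pathsLe 0) : f = Λ.id (Λ.r f) :=
  Λ.eq_id_of_d_eq_zero f (le_antisymm (mem_pathsLe.mp hf).1 bot_le)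

lemma vPathsLe_zero (v : Λ.Obj) : Λ.vPathsLe v 0 = {Λ.id v} := by
  ext f
  refine ⟨fun ⟨hf, hr⟩ => by rw [Set.mem_singleton_iff, eq_id_of_mem_pathsLe_zero hf, hr], ?_⟩
  rintro rfl
  exact ⟨mem_pathsLe.mpr ⟨by rw [Λ.d_id], fun i h => by simp [Λ.d_id] at h⟩, Λ.r_id v⟩

lemma self_mem_pathsLe (f : Λ.Mor) : f ∈ Λ.pathsLe (Λ.d f) :=
  mem_pathsLe.mpr ⟨le_rfl, fun _ h => absurd h (lt_irrefl _)⟩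

lemma comp_mem_pathsLe_s12 (α : Λ.Mor) {m : Fin k → ℕ} {τ : Λ.Mor}
    (hτ : τ ∈ Λ.vPathsLe (Λ.s α) m) : Λ.comp α τ ∈ Λ.pathsLe (Λ.d α + m) := by
  obtain ⟨hτ, hr⟩ := hτ
  rw [mem_pathsLe] at hτ ⊢
  rw [Λ.d_comp α τ hr.symm, Λ.s_comp α τ hr.symm]
  exact ⟨add_le_add_right hτ.1 _, fun i hi => hτ.2 i (by simpa using hi)⟩

lemma vPathsLe_finite_s12 (hrf : Λ.RowFinite) (v : Λ.Obj) (n : Fin k → ℕ) :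
    (Λ.vPathsLe v n).Finite := by
  refine ((Set.finite_Iic n).biUnion fun m _ => hrf v m).subset ?_
  rintro f ⟨hf, hr⟩
  exact Set.mem_biUnion (mem_pathsLe.mp hf).1 ⟨hr, rfl⟩

lemma d_eq_single_of_mem_vPathsLe {v : Λ.Obj} {i : Fin k} {p g : Λ.Mor}
    (hp : p ∈ Λ.vPathsLe v (Pi.single i 1)) (hg : Λ.r g = v) (hgd : Λ.d g = Pi.single i 1) :
    Λ.d p = Pi.single i 1 := by
  obtain ⟨hp, rfl⟩ := hp
  rw [mem_pathsLe] at hp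
  have hoff : ∀ j ≠ i, Λ.d p j = 0 := fun j hj => by simpa [hj] using hp.1 j
  have hpi : Λ.d p i ≤ 1 := by simpa using hp.1 i
  rcases Nat.le_one_iff_eq_zero_or_eq_one.mp hpi with h0 | h1
  · have hsp : Λ.s p = Λ.r p := by
      have hd : Λ.d p = 0 := funext fun j => by by_cases hj : j = i <;> simp_all
      rw [Λ.eq_id_of_d_eq_zero p hd, Λ.r_id, Λ.s_id]
    exact absurd ⟨hg.trans hsp.symm, hgd⟩ (hp.2 i (by simp [h0]) g)
  · funext j
    by_cases hj : j = i <;> simp_all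

end KGraph

namespace KPFamily

variable {k : ℕ} {Λ : KGraph k} {R : Type*} [CommRing R] {A : Type*} [Ring A] [Algebra R A]
  (E : KPFamily Λ R A)

lemma Sstar_mul_S_self {N : Fin k → ℕ} {α : Λ.Mor} (hα : α ∈ Λ.pathsLe N) :
    E.Sstar α * E.S α = E.P (Λ.s α) := by
  by_cases hN : N = 0
  · subst hN
    rw [KGraph.eq_id_of_mem_pathsLe_zero hα, E.Sstar_id, E.S_id, E.kp1_idem, Λ.s_id]
  · exact E.kp3_eq N hN α hα

lemma Sstar_mul_S_of_mem_pathsLe {N : Fin k → ℕ} {α β : Λ.Mor} [Decidable (α = β)]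
    (hα : α ∈ Λ.pathsLe N) (hβ : β ∈ Λ.pathsLe N) :
    E.Sstar α * E.S β = if α = β then E.P (Λ.s α) else 0 := by
  split_ifs with h
  · subst h
    exact E.Sstar_mul_S_self hα
  · by_cases hN : N = 0
    · subst hN
      have hα' := KGraph.eq_id_of_mem_pathsLe_zero hα
      have hβ' := KGraph.eq_id_of_mem_pathsLe_zero hβ
      rw [hα', hβ', E.Sstar_id, E.S_id]
      exact E.kp1_orth _ _ fun hr => h (by rw [hα', hβ', hr])
    · exact E.kp3_ne N hN α hα β hβ h

lemma P_eq_sum_vPathsLe (v : Λ.Obj) (n : Fin k → ℕ) (hfin : (Λ.vPathsLe v n).Finite) :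
    E.P v = ∑ f ∈ hfin.toFinset, E.S f * E.Sstar f := by
  by_cases hn : n = 0
  · subst hn
    have : hfin.toFinset = {Λ.id v} := by simp [KGraph.vPathsLe_zero]
    rw [this, Finset.sum_singleton, E.S_id, E.Sstar_id, E.kp1_idem]
  · exact E.kp4 v n hn hfin

lemma S_mul_Sstar_eq_zero {α β : Λ.Mor} (h : Λ.s α ≠ Λ.s β) : E.S α * E.Sstar β = 0 := by
  rw [← E.kp2_s α, ← E.kp2_star_s β, mul_assoc, ← mul_assoc (E.P _), E.kp1_orth _ _ h, zero_mul,
    mul_zero]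

lemma S_mul_Sstar_eq_sum {α β : Λ.Mor} (hs : Λ.s α = Λ.s β) (m : Fin k → ℕ)
    (hfin : (Λ.vPathsLe (Λ.s α) m).Finite) :
    E.S α * E.Sstar β = ∑ τ ∈ hfin.toFinset, E.S (Λ.comp α τ) * E.Sstar (Λ.comp β τ) := by
  have hP : E.S α * E.Sstar β = E.S α * (E.P (Λ.s α) * E.Sstar β) := by rw [hs, E.kp2_star_s]
  rw [hP, E.P_eq_sum_vPathsLe _ m hfin, Finset.sum_mul, Finset.mul_sum]
  refine Finset.sum_congr rfl fun τ hτ => ?_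
  have hr : Λ.s α = Λ.r τ := (hfin.mem_toFinset.mp hτ).2.symm
  rw [← E.kp2_comp α τ hr, ← E.kp2_comp_star β τ (hs ▸ hr)]
  simp only [mul_assoc]

lemma S_eq_zero_of_P_s_eq_zero {f : Λ.Mor} (h : E.P (Λ.s f) = 0) : E.S f = 0 := by
  rw [← E.kp2_s, h, mul_zero]

variable {B : Type*} [Ring B] [Algebra R B]

@[simps]
def map (φ : A →ₐ[R] B) : KPFamily Λ R B where
  P v := φ (E.P v)
  S f := φ (E.S f)
  Sstar f := φ (E.Sstar f)
  S_id v := by rw [E.S_id]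
  Sstar_id v := by rw [E.Sstar_id]
  kp1_idem v := by rw [← map_mul, E.kp1_idem]
  kp1_orth u v h := by rw [← map_mul, E.kp1_orth u v h, map_zero]
  kp2_comp f g h := by rw [← map_mul, E.kp2_comp f g h]
  kp2_comp_star f g h := by rw [← map_mul, E.kp2_comp_star f g h]
  kp2_r f := by rw [← map_mul, E.kp2_r]
  kp2_s f := by rw [← map_mul, E.kp2_s]
  kp2_star_s f := by rw [← map_mul, E.kp2_star_s]
  kp2_star_r f := by rw [← map_mul, E.kp2_star_r]
  kp3_eq n hn f hf := by rw [← map_mul, E.kp3_eq n hn f hf]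
  kp3_ne n hn f hf g hg hfg := by rw [← map_mul, E.kp3_ne n hn f hf g hg hfg, map_zero]
  kp4 v n hn hfin := by rw [E.kp4 v n hn hfin, map_sum]; simp only [map_mul]

noncomputable def linearCombination : (Λ.Mor × Λ.Mor →₀ R) →ₗ[R] A :=
  Finsupp.linearCombination R fun q => E.S q.1 * E.Sstar q.2

lemma linearCombination_eq_sum (l : Λ.Mor × Λ.Mor →₀ R) :
    E.linearCombination l = ∑ q ∈ l.support, l q • (E.S q.1 * E.Sstar q.2) :=
  Finsupp.linearCombination_apply R l

lemma linearCombination_single (q : Λ.Mor × Λ.Mor) (r : R) :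
    E.linearCombination (Finsupp.single q r) = r • (E.S q.1 * E.Sstar q.2) :=
  Finsupp.linearCombination_single R r q

lemma mem_component_iff {n : Fin k → ℤ} {x : A} :
    x ∈ E.component n ↔
      ∃ l ∈ Finsupp.supported R R (Λ.pairsOfDegree n), E.linearCombination l = x := by
  rw [component, linearCombination, ← Finsupp.mem_span_image_iff_linearCombination]
  congr!
  ext x
  simp [KGraph.pairsOfDegree, eq_comm]

lemma Sstar_mul_linearCombination_mul_S {N M : Fin k → ℕ} {l : Λ.Mor × Λ.Mor →₀ R}
    (hl : l ∈ Finsupp.supported R R (Λ.pathsLePairs N M)) {q : Λ.Mor × Λ.Mor}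
    (hq : q ∈ Λ.pathsLePairs N M) :
    E.Sstar q.1 * E.linearCombination l * E.S q.2 = l q • E.P (Λ.s q.1) := by
  classical
  have hterm : ∀ p ∈ l.support, E.Sstar q.1 * (l p • (E.S p.1 * E.Sstar p.2)) * E.S q.2 =
      if q = p then l p • E.P (Λ.s q.1) else 0 := by
    intro p hp
    obtain ⟨hp1, hp2, -⟩ := hl hp
    obtain ⟨hq1, hq2, hqs⟩ := hq
    rw [mul_smul_comm, smul_mul_assoc, ← mul_assoc, mul_assoc _ (E.Sstar p.2),
      E.Sstar_mul_S_of_mem_pathsLe hq1 hp1, E.Sstar_mul_S_of_mem_pathsLe hp2 hq2]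
    by_cases h : q = p
    · subst h
      rw [if_pos rfl, if_pos rfl, if_pos rfl, ← hqs, E.kp1_idem]
    · rw [if_neg h]
      by_cases h1 : q.1 = p.1
      · rw [if_pos h1, if_neg fun h2 : p.2 = q.2 => h (Prod.ext h1 h2.symm), mul_zero, smul_zero]
      · rw [if_neg h1, zero_mul, smul_zero]
  rw [linearCombination_eq_sum, Finset.mul_sum, Finset.sum_mul, Finset.sum_congr rfl hterm,
    Finset.sum_ite_eq]
  split_ifs with h
  · rfl
  · rw [Finsupp.notMem_support_iff.mp h, zero_smul]

/-- Each `s_α s_{β*}` is expanded by (KP4) over `τ ∈ s(α)Λ^{≤N - d(α)}`. Since `d(α) - d(β) = n`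
for every term, all the `βτ` then lie in the single set `Λ^{≤N - n}`. -/
lemma exists_linearCombination_eq (hrf : Λ.RowFinite) {n : Fin k → ℤ}
    {l : Λ.Mor × Λ.Mor →₀ R} (hl : l ∈ Finsupp.supported R R (Λ.pairsOfDegree n)) :
    ∃ N M, ∃ l' ∈ Finsupp.supported R R (Λ.pathsLePairs N M),
      E.linearCombination l' = E.linearCombination l := by
  classical
  set N : Fin k → ℕ := l.support.sup fun q => Λ.d q.1
  have hN : ∀ q ∈ l.support, Λ.d q.1 ≤ N := fun q hq => Finset.le_sup (f := fun q => Λ.d q.1) hq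
  set tails : Λ.Mor × Λ.Mor → Finset Λ.Mor := fun q =>
    (Λ.vPathsLe_finite_s12 hrf (Λ.s q.1) (N - Λ.d q.1)).toFinset
  refine ⟨N, fun i => (N i - n i).toNat,
    ∑ q ∈ l.support with Λ.s q.1 = Λ.s q.2, ∑ τ ∈ tails q,
      Finsupp.single (Λ.comp q.1 τ, Λ.comp q.2 τ) (l q), ?_, ?_⟩
  · refine Submodule.sum_mem _ fun q hq => Submodule.sum_mem _ fun τ hτ => ?_
    obtain ⟨hq, hs⟩ := Finset.mem_filter.mp hq
    have hτ := (Set.Finite.mem_toFinset _).mp hτ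
    have hτ' : τ ∈ Λ.vPathsLe (Λ.s q.2) (N - Λ.d q.1) := hs ▸ hτ
    refine Finsupp.single_mem_supported R _ ⟨?_, ?_, ?_⟩
    · simpa only [add_tsub_cancel_of_le (hN q hq)] using Λ.comp_mem_pathsLe_s12 q.1 hτ
    · convert Λ.comp_mem_pathsLe_s12 q.2 hτ' using 2
      funext i
      have hdeg := hl hq i
      have hNi := hN q hq i
      simp only [Pi.add_apply, Pi.sub_apply] at hNi ⊢
      omega
    · rw [Λ.s_comp _ _ hτ.2.symm, Λ.s_comp _ _ hτ'.2.symm]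
  · simp only [map_sum, linearCombination_single, ← Finset.smul_sum]
    rw [E.linearCombination_eq_sum, ← Finset.sum_filter_of_ne (s := l.support)
      (p := fun q => Λ.s q.1 = Λ.s q.2)]
    · exact Finset.sum_congr rfl fun q hq => by
        rw [E.S_mul_Sstar_eq_sum (Finset.mem_filter.mp hq).2]
    · intro q _ hq
      by_contra hs
      exact hq (by rw [E.S_mul_Sstar_eq_zero hs, smul_zero])

section Ideal

variable {B : Type*} [Ring B] [Algebra R B] (F : KPFamily Λ R A) (I : TwoSidedIdeal A)

lemma hereditary_HSet : Λ.Hereditary (F.HSet I) := fun f hf => by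
  have hS : F.S f ∈ I := by rw [← F.kp2_r f]; exact I.mul_mem_right _ _ hf
  show F.P (Λ.s f) ∈ I
  rw [← F.Sstar_mul_S_self (Λ.self_mem_pathsLe f)]
  exact I.mul_mem_left _ _ hS

lemma saturated_HSet (hrf : Λ.RowFinite) : Λ.Saturated (F.HSet I) := by
  rintro v ⟨i, hi⟩
  have hfin := Λ.vPathsLe_finite_s12 hrf v (Pi.single i 1)
  show F.P v ∈ I
  rw [F.P_eq_sum_vPathsLe v _ hfin]
  refine sum_mem fun f hf => ?_
  rw [← F.kp2_star_s f, ← mul_assoc]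
  exact I.mul_mem_right _ _ (I.mul_mem_left _ _ (hi f (hfin.mem_toFinset.mp hf)))

variable {F I}

lemma IsBasicIdeal.s_mem_HSet (hI : F.IsBasicIdeal I) {N M : Fin k → ℕ}
    {l : Λ.Mor × Λ.Mor →₀ R} (hl : l ∈ Finsupp.supported R R (Λ.pathsLePairs N M))
    (hlI : F.linearCombination l ∈ I) {q : Λ.Mor × Λ.Mor} (hq : q ∈ l.support) :
    Λ.s q.1 ∈ F.HSet I := by
  refine hI (l q) _ (Finsupp.mem_support_iff.mp hq) ?_
  rw [← F.Sstar_mul_linearCombination_mul_S hl (hl hq)]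
  exact I.mul_mem_right _ _ (I.mul_mem_left _ _ hlI)

lemma IsBasicIdeal.map_eq_zero_of_mem_component (hI : F.IsBasicIdeal I) (hrf : Λ.RowFinite)
    (ψ : A →ₐ[R] B) (hψ : ∀ f, Λ.s f ∈ F.HSet I → ψ (F.S f) = 0) {n : Fin k → ℤ} {x : A}
    (hxI : x ∈ I) (hx : x ∈ F.component n) : ψ x = 0 := by
  obtain ⟨l, hl, rfl⟩ := F.mem_component_iff.mp hx
  obtain ⟨N, M, l', hl', heq⟩ := F.exists_linearCombination_eq hrf hl
  rw [← heq] at hxI ⊢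
  rw [linearCombination_eq_sum, map_sum]
  refine Finset.sum_eq_zero fun q hq => ?_
  rw [map_smul, map_mul, hψ _ (hI.s_mem_HSet hl' hxI hq), zero_mul, smul_zero]

lemma le_ker_of_isBasicIdeal_of_isGradedIdeal (hIb : F.IsBasicIdeal I)
    (hIgr : F.IsGradedIdeal I) (hrf : Λ.RowFinite) (ψ : A →ₐ[R] B)
    (hψ : ∀ f, Λ.s f ∈ F.HSet I → ψ (F.S f) = 0) : I ≤ TwoSidedIdeal.ker ψ := fun x hx =>
  TwoSidedIdeal.mem_span_iff.mp (hIgr x hx) _ fun _ ⟨hyI, _, hy⟩ =>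
    (TwoSidedIdeal.mem_ker ψ).mpr (hIb.map_eq_zero_of_mem_component hrf ψ hψ hyI hy)

end Ideal

end KPFamily

namespace RestrictionIso

variable {k : ℕ} {Λ Λ' : KGraph k} {H : Set Λ.Obj} (e : RestrictionIso Λ' Λ H)

lemma objMap_notMem (v' : Λ'.Obj) : e.objMap v' ∉ H := by
  have h := Set.mem_range_self (f := e.objMap) v'
  rwa [e.objMap_range] at h

lemma s_morMap_notMem (f' : Λ'.Mor) : Λ.s (e.morMap f') ∉ H := by
  rw [e.map_s]; exact e.objMap_notMem _

lemma exists_objMap_eq_or_mem (v : Λ.Obj) : (∃ v', e.objMap v' = v) ∨ v ∈ H := by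
  by_cases hv : v ∈ H
  · exact .inr hv
  · exact .inl (by rwa [← Set.mem_range, e.objMap_range])

lemma exists_morMap_eq_of_notMem {f : Λ.Mor} (hr : Λ.r f ∉ H) (hs : Λ.s f ∉ H) :
    ∃ f', e.morMap f' = f := by
  rw [← Set.mem_range, e.morMap_range]; exact ⟨hr, hs⟩

lemma exists_morMap_eq_or_s_mem (hH : Λ.Hereditary H) (f : Λ.Mor) :
    (∃ f', e.morMap f' = f) ∨ Λ.s f ∈ H :=
  or_iff_not_imp_right.mpr fun hs => e.exists_morMap_eq_of_notMem (fun hr => hs (hH f hr)) hs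

lemma not_exists_morMap_eq {f : Λ.Mor} (hf : Λ.s f ∈ H) : ¬∃ f', e.morMap f' = f :=
  fun ⟨f', hf'⟩ => e.s_morMap_notMem f' (hf' ▸ hf)

lemma mem_pathsLe_of_morMap_mem {f' : Λ'.Mor} {n : Fin k → ℕ}
    (h : e.morMap f' ∈ Λ.pathsLe n) : f' ∈ Λ'.pathsLe n := by
  rw [KGraph.mem_pathsLe, e.map_d] at h
  rw [KGraph.mem_pathsLe]
  refine ⟨h.1, fun i hi g' hg' => h.2 i hi (e.morMap g') ⟨?_, by rw [e.map_d, hg'.2]⟩⟩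
  rw [e.map_r, hg'.1, ← e.map_s]

/-- If `e.morMap f'` had an edge of colour `i` at its source while `f'` has none, then every path
in `s(f')Λ^{≤eᵢ}` would be an edge of colour `i` with source in `H`, and saturation would put
`s(f')` in `H`. -/
lemma morMap_mem_pathsLe (hHsat : Λ.Saturated H) {f' : Λ'.Mor} {n : Fin k → ℕ}
    (h : f' ∈ Λ'.pathsLe n) : e.morMap f' ∈ Λ.pathsLe n := by
  rw [KGraph.mem_pathsLe] at h ⊢
  rw [e.map_d]
  refine ⟨h.1, fun i hi g hg => e.s_morMap_notMem f' (hHsat _ ⟨i, fun p hp => ?_⟩)⟩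
  by_contra hps
  have hpr : Λ.r p ∉ H := hp.2 ▸ e.s_morMap_notMem f'
  obtain ⟨p', rfl⟩ := e.exists_morMap_eq_of_notMem hpr hps
  refine h.2 i hi p' ⟨e.objMap_injective ?_, ?_⟩
  · rw [← e.map_r, ← e.map_s, hp.2]
  · rw [← e.map_d, KGraph.d_eq_single_of_mem_vPathsLe hp hg.1 hg.2]

lemma image_vPathsLe (hHsat : Λ.Saturated H) (v' : Λ'.Obj) (n : Fin k → ℕ) :
    e.morMap '' Λ'.vPathsLe v' n = {f ∈ Λ.vPathsLe (e.objMap v') n | Λ.s f ∉ H} := by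
  ext f
  constructor
  · rintro ⟨f', ⟨hf', rfl⟩, rfl⟩
    exact ⟨⟨e.morMap_mem_pathsLe hHsat hf', e.map_r f'⟩, e.s_morMap_notMem f'⟩
  · rintro ⟨⟨hf, hr⟩, hs⟩
    obtain ⟨f', rfl⟩ := e.exists_morMap_eq_of_notMem (hr ▸ e.objMap_notMem v') hs
    exact ⟨f', ⟨e.mem_pathsLe_of_morMap_mem hf, e.objMap_injective (by rw [← e.map_r, hr])⟩, rfl⟩

lemma finite_vPathsLe (hHsat : Λ.Saturated H) {v' : Λ'.Obj} {n : Fin k → ℕ}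
    (hfin : (Λ.vPathsLe (e.objMap v') n).Finite) : (Λ'.vPathsLe v' n).Finite :=
  Set.Finite.of_finite_image (by rw [e.image_vPathsLe hHsat]; exact hfin.sep _)
    e.morMap_injective.injOn

lemma sum_vPathsLe (hHsat : Λ.Saturated H) {M : Type*} [AddCommMonoid M] (φ : Λ.Mor → M)
    {v' : Λ'.Obj} {n : Fin k → ℕ} (hfin : (Λ.vPathsLe (e.objMap v') n).Finite)
    (hfin' : (Λ'.vPathsLe v' n).Finite) (hφ : ∀ f, Λ.s f ∈ H → φ f = 0) :
    ∑ f ∈ hfin.toFinset, φ f = ∑ f' ∈ hfin'.toFinset, φ (e.morMap f') := by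
  classical
  have himage : hfin.toFinset.filter (fun f => Λ.s f ∉ H) = hfin'.toFinset.image e.morMap := by
    ext f
    simp only [Finset.mem_filter, Set.Finite.mem_toFinset, Finset.mem_image]
    rw [← Set.mem_image, e.image_vPathsLe hHsat, Set.mem_sep_iff]
  rw [← Finset.sum_filter_of_ne (p := fun f => Λ.s f ∉ H) fun f _ hf hs => hf (hφ f hs), himage,
    Finset.sum_image e.morMap_injective.injOn]

variable {R : Type*} [CommRing R] {C : Type*} [Ring C] [Algebra R C]

@[simps]
def restrictFamily (hHsat : Λ.Saturated H) (hrf : Λ.RowFinite) (E : KPFamily Λ R C)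
    (hE : ∀ v ∈ H, E.P v = 0) : KPFamily Λ' R C where
  P v' := E.P (e.objMap v')
  S f' := E.S (e.morMap f')
  Sstar f' := E.Sstar (e.morMap f')
  S_id v' := by rw [e.map_id, E.S_id]
  Sstar_id v' := by rw [e.map_id, E.Sstar_id]
  kp1_idem v' := E.kp1_idem _
  kp1_orth u' v' h := E.kp1_orth _ _ (e.objMap_injective.ne h)
  kp2_comp f' g' h := by
    rw [e.map_comp f' g' h]; exact E.kp2_comp _ _ (by rw [e.map_s, e.map_r, h])
  kp2_comp_star f' g' h := by
    rw [e.map_comp f' g' h]; exact E.kp2_comp_star _ _ (by rw [e.map_s, e.map_r, h])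
  kp2_r f' := by rw [← e.map_r]; exact E.kp2_r _
  kp2_s f' := by rw [← e.map_s]; exact E.kp2_s _
  kp2_star_s f' := by rw [← e.map_s]; exact E.kp2_star_s _
  kp2_star_r f' := by rw [← e.map_r]; exact E.kp2_star_r _
  kp3_eq n hn f' hf' := by
    rw [← e.map_s]; exact E.kp3_eq n hn _ (e.morMap_mem_pathsLe hHsat hf')
  kp3_ne n hn f' hf' g' hg' h :=
    E.kp3_ne n hn _ (e.morMap_mem_pathsLe hHsat hf') _ (e.morMap_mem_pathsLe hHsat hg')
      (e.morMap_injective.ne h)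
  kp4 v' n hn hfin' := by
    have hfin := Λ.vPathsLe_finite_s12 hrf (e.objMap v') n
    rw [E.kp4 _ n hn hfin, e.sum_vPathsLe hHsat _ hfin hfin' fun f hf => by
      rw [E.S_eq_zero_of_P_s_eq_zero (hE _ hf), zero_mul]]

section Extend

variable {X : Type*}

@[simp]
lemma extend_objMap (g : Λ'.Obj → X) (x : Λ.Obj → X) (v' : Λ'.Obj) :
    Function.extend e.objMap g x (e.objMap v') = g v' :=
  e.objMap_injective.extend_apply g x v'

@[simp]
lemma extend_morMap (g : Λ'.Mor → X) (x : Λ.Mor → X) (f' : Λ'.Mor) :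
    Function.extend e.morMap g x (e.morMap f') = g f' :=
  e.morMap_injective.extend_apply g x f'

lemma extend_objMap_of_mem [Zero X] (g : Λ'.Obj → X) {v : Λ.Obj} (hv : v ∈ H) :
    Function.extend e.objMap g 0 v = 0 :=
  Function.extend_apply' _ _ _ fun ⟨v', h⟩ => e.objMap_notMem v' (h ▸ hv)

lemma extend_morMap_of_s_mem [Zero X] (g : Λ'.Mor → X) {f : Λ.Mor} (hf : Λ.s f ∈ H) :
    Function.extend e.morMap g 0 f = 0 :=
  Function.extend_apply' _ _ _ (e.not_exists_morMap_eq hf)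

end Extend

@[simps]
noncomputable def extendFamily (hHher : Λ.Hereditary H) (hHsat : Λ.Saturated H)
    (G : KPFamily Λ' R C) : KPFamily Λ R C where
  P := Function.extend e.objMap G.P 0
  S := Function.extend e.morMap G.S 0
  Sstar := Function.extend e.morMap G.Sstar 0
  S_id v := by
    rcases e.exists_objMap_eq_or_mem v with ⟨v', rfl⟩ | hv
    · rw [← e.map_id, extend_morMap, extend_objMap, G.S_id]
    · rw [e.extend_morMap_of_s_mem _ (by rwa [Λ.s_id]), e.extend_objMap_of_mem _ hv]
  Sstar_id v := by
    rcases e.exists_objMap_eq_or_mem v with ⟨v', rfl⟩ | hv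
    · rw [← e.map_id, extend_morMap, extend_objMap, G.Sstar_id]
    · rw [e.extend_morMap_of_s_mem _ (by rwa [Λ.s_id]), e.extend_objMap_of_mem _ hv]
  kp1_idem v := by
    rcases e.exists_objMap_eq_or_mem v with ⟨v', rfl⟩ | hv
    · rw [extend_objMap, G.kp1_idem]
    · rw [e.extend_objMap_of_mem _ hv, mul_zero]
  kp1_orth u v h := by
    rcases e.exists_objMap_eq_or_mem u with ⟨u', rfl⟩ | hu
    · rcases e.exists_objMap_eq_or_mem v with ⟨v', rfl⟩ | hv
      · rw [extend_objMap, extend_objMap]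
        exact G.kp1_orth _ _ fun h' => h (h' ▸ rfl)
      · rw [e.extend_objMap_of_mem _ hv, mul_zero]
    · rw [e.extend_objMap_of_mem _ hu, zero_mul]
  kp2_comp f g hfg := by
    rcases e.exists_morMap_eq_or_s_mem hHher g with ⟨g', rfl⟩ | hg
    · rcases e.exists_morMap_eq_or_s_mem hHher f with ⟨f', rfl⟩ | hf
      · have hc : Λ'.s f' = Λ'.r g' := e.objMap_injective (by rw [← e.map_s, ← e.map_r, hfg])
        rw [← e.map_comp f' g' hc, extend_morMap, extend_morMap, extend_morMap, G.kp2_comp _ _ hc]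
      · rw [e.extend_morMap_of_s_mem _ hf, zero_mul, e.extend_morMap_of_s_mem]
        rw [Λ.s_comp f _ hfg]; exact hHher _ (hfg ▸ hf)
    · rw [e.extend_morMap_of_s_mem _ hg, mul_zero,
        e.extend_morMap_of_s_mem _ (by rwa [Λ.s_comp f g hfg])]
  kp2_comp_star f g hfg := by
    rcases e.exists_morMap_eq_or_s_mem hHher g with ⟨g', rfl⟩ | hg
    · rcases e.exists_morMap_eq_or_s_mem hHher f with ⟨f', rfl⟩ | hf
      · have hc : Λ'.s f' = Λ'.r g' := e.objMap_injective (by rw [← e.map_s, ← e.map_r, hfg])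
        rw [← e.map_comp f' g' hc, extend_morMap, extend_morMap, extend_morMap,
          G.kp2_comp_star _ _ hc]
      · rw [e.extend_morMap_of_s_mem _ hf, mul_zero, e.extend_morMap_of_s_mem]
        rw [Λ.s_comp f _ hfg]; exact hHher _ (hfg ▸ hf)
    · rw [e.extend_morMap_of_s_mem _ hg, zero_mul,
        e.extend_morMap_of_s_mem _ (by rwa [Λ.s_comp f g hfg])]
  kp2_r f := by
    rcases e.exists_morMap_eq_or_s_mem hHher f with ⟨f', rfl⟩ | hf
    · rw [e.map_r, extend_objMap, extend_morMap, G.kp2_r]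
    · rw [e.extend_morMap_of_s_mem _ hf, mul_zero]
  kp2_s f := by
    rcases e.exists_morMap_eq_or_s_mem hHher f with ⟨f', rfl⟩ | hf
    · rw [e.map_s, extend_objMap, extend_morMap, G.kp2_s]
    · rw [e.extend_morMap_of_s_mem _ hf, zero_mul]
  kp2_star_s f := by
    rcases e.exists_morMap_eq_or_s_mem hHher f with ⟨f', rfl⟩ | hf
    · rw [e.map_s, extend_objMap, extend_morMap, G.kp2_star_s]
    · rw [e.extend_morMap_of_s_mem _ hf, mul_zero]
  kp2_star_r f := by
    rcases e.exists_morMap_eq_or_s_mem hHher f with ⟨f', rfl⟩ | hf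
    · rw [e.map_r, extend_objMap, extend_morMap, G.kp2_star_r]
    · rw [e.extend_morMap_of_s_mem _ hf, zero_mul]
  kp3_eq n hn f hf := by
    rcases e.exists_morMap_eq_or_s_mem hHher f with ⟨f', rfl⟩ | hs
    · rw [extend_morMap, extend_morMap, e.map_s, extend_objMap,
        G.kp3_eq n hn f' (e.mem_pathsLe_of_morMap_mem hf)]
    · rw [e.extend_morMap_of_s_mem _ hs, zero_mul, e.extend_objMap_of_mem _ hs]
  kp3_ne n hn f hf g hg hfg := by
    rcases e.exists_morMap_eq_or_s_mem hHher f with ⟨f', rfl⟩ | hs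
    · rcases e.exists_morMap_eq_or_s_mem hHher g with ⟨g', rfl⟩ | hs'
      · rw [extend_morMap, extend_morMap]
        exact G.kp3_ne n hn f' (e.mem_pathsLe_of_morMap_mem hf) g'
          (e.mem_pathsLe_of_morMap_mem hg) fun h => hfg (h ▸ rfl)
      · rw [e.extend_morMap_of_s_mem _ hs', mul_zero]
    · rw [e.extend_morMap_of_s_mem _ hs, zero_mul]
  kp4 v n hn hfin := by
    rcases e.exists_objMap_eq_or_mem v with ⟨v', rfl⟩ | hv
    · rw [extend_objMap, G.kp4 v' n hn (e.finite_vPathsLe hHsat hfin),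
        e.sum_vPathsLe hHsat _ hfin (e.finite_vPathsLe hHsat hfin) fun f hf => by
          rw [e.extend_morMap_of_s_mem _ hf, zero_mul]]
      simp only [extend_morMap]
    · rw [e.extend_objMap_of_mem _ hv]
      refine (Finset.sum_eq_zero fun f hf => ?_).symm
      rw [e.extend_morMap_of_s_mem _ (hHher f ((hfin.mem_toFinset.mp hf).2 ▸ hv)), zero_mul]

end RestrictionIso

lemma TwoSidedIdeal.mkₐ_ringCon_eq_zero_iff {R A : Type*} [CommRing R] [Ring A] [Algebra R A]
    (I : TwoSidedIdeal A) {a : A} : I.ringCon.mkₐ R a = 0 ↔ a ∈ I := by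
  conv_rhs => rw [← TwoSidedIdeal.ker_ringCon_mk' I]
  exact (TwoSidedIdeal.mem_ker _).symm

namespace IsKPAlgebra

universe w

variable {k : ℕ} {Λ : KGraph k} {R : Type*} [CommRing R] {A : Type*} [Ring A] [Algebra R A]
  {F : KPFamily Λ R A} {C : Type} [Ring C] [Algebra R C]

/-- The universal property quantifies over algebras in a single universe `w`; passing through
`ULift.{w} C` makes it available for algebras `C : Type`. -/
lemma existsUnique_algHom (hA : IsKPAlgebra.{w} Λ R A F) (G : KPFamily Λ R C) :
    ∃! π : A →ₐ[R] C, (∀ v, π (F.P v) = G.P v) ∧ (∀ f, π (F.S f) = G.S f) ∧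
      (∀ f, π (F.Sstar f) = G.Sstar f) := by
  let j : ULift.{w} C ≃ₐ[R] C := ULift.algEquiv
  obtain ⟨π₀, ⟨hP, hS, hSstar⟩, huniq⟩ := hA.1 (ULift.{w} C) (G.map j.symm.toAlgHom)
  refine ⟨j.toAlgHom.comp π₀, ⟨fun v => ?_, fun f => ?_, fun f => ?_⟩,
    fun π ⟨hP', hS', hSstar'⟩ => ?_⟩
  · simp [hP v]
  · simp [hS f]
  · simp [hSstar f]
  · have h := huniq (j.symm.toAlgHom.comp π) ⟨fun v => by simp [hP'], fun f => by simp [hS'],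
      fun f => by simp [hSstar']⟩
    ext a
    simp [← h]

lemma algHom_ext (hA : IsKPAlgebra.{w} Λ R A F) {φ₁ φ₂ : A →ₐ[R] C}
    (hP : ∀ v, φ₁ (F.P v) = φ₂ (F.P v)) (hS : ∀ f, φ₁ (F.S f) = φ₂ (F.S f))
    (hSstar : ∀ f, φ₁ (F.Sstar f) = φ₂ (F.Sstar f)) : φ₁ = φ₂ :=
  (hA.existsUnique_algHom (F.map φ₂)).unique ⟨hP, hS, hSstar⟩
    ⟨fun _ => rfl, fun _ => rfl, fun _ => rfl⟩

lemma algHom_ext_of_restrictionIso (hA : IsKPAlgebra.{w} Λ R A F) {Λ' : KGraph k}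
    {H : Set Λ.Obj} (e : RestrictionIso Λ' Λ H) (hHher : Λ.Hereditary H) {φ₁ φ₂ : A →ₐ[R] C}
    (h₁ : ∀ v ∈ H, φ₁ (F.P v) = 0) (h₂ : ∀ v ∈ H, φ₂ (F.P v) = 0)
    (hP : ∀ v', φ₁ (F.P (e.objMap v')) = φ₂ (F.P (e.objMap v')))
    (hS : ∀ f', φ₁ (F.S (e.morMap f')) = φ₂ (F.S (e.morMap f')))
    (hSstar : ∀ f', φ₁ (F.Sstar (e.morMap f')) = φ₂ (F.Sstar (e.morMap f'))) : φ₁ = φ₂ := by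
  refine hA.algHom_ext (fun v => ?_) (fun f => ?_) (fun f => ?_)
  · rcases e.exists_objMap_eq_or_mem v with ⟨v', rfl⟩ | hv
    · exact hP v'
    · rw [h₁ v hv, h₂ v hv]
  · rcases e.exists_morMap_eq_or_s_mem hHher f with ⟨f', rfl⟩ | hf
    · exact hS f'
    · rw [← F.kp2_s, map_mul, map_mul, h₁ _ hf, h₂ _ hf, mul_zero, mul_zero]
  · rcases e.exists_morMap_eq_or_s_mem hHher f with ⟨f', rfl⟩ | hf
    · exact hSstar f'
    · rw [← F.kp2_star_s, map_mul, map_mul, h₁ _ hf, h₂ _ hf, zero_mul, zero_mul]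

end IsKPAlgebra

/-- `ψ` stands for `π⁻¹ ∘ (A → A/I)`: a surjection `A → B` with kernel `I` is the same datum as
an isomorphism `A/I ≃ B`. -/
theorem quotient_iso_of_basic_graded_general
    {k : ℕ} (Λ : KGraph k) (hrf : Λ.RowFinite)
    (R : Type) [CommRing R] (A : Type) [Ring A] [Algebra R A]
    (F : KPFamily Λ R A) (hA : IsKPAlgebra Λ R A F)
    (I : TwoSidedIdeal A) (hIb : F.IsBasicIdeal I) (hIgr : F.IsGradedIdeal I)
    (Λ' : KGraph k) (e : RestrictionIso Λ' Λ (F.HSet I))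
    (B : Type) [Ring B] [Algebra R B]
    (G : KPFamily Λ' R B) (hBKP : IsKPAlgebra Λ' R B G) :
    ∃ ψ : A →ₐ[R] B, Function.Surjective ψ ∧ (∀ a : A, ψ a = 0 ↔ a ∈ I) ∧
      (∀ v : Λ'.Obj, ψ (F.P (e.objMap v)) = G.P v) ∧
      (∀ f : Λ'.Mor, ψ (F.S (e.morMap f)) = G.S f) ∧
      (∀ f : Λ'.Mor, ψ (F.Sstar (e.morMap f)) = G.Sstar f) := by
  have hHher := F.hereditary_HSet I
  have hHsat := F.saturated_HSet I hrf
  set q := I.ringCon.mkₐ R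
  have hq : ∀ v ∈ F.HSet I, (F.map q).P v = 0 := fun _ => I.mkₐ_ringCon_eq_zero_iff.mpr
  obtain ⟨ψ, ⟨hψP, hψS, hψSstar⟩, -⟩ := hA.existsUnique_algHom (e.extendFamily hHher hHsat G)
  obtain ⟨π, ⟨hπP, hπS, hπSstar⟩, -⟩ :=
    hBKP.existsUnique_algHom (e.restrictFamily hHsat hrf (F.map q) hq)
  have hπψ : π.comp ψ = q := hA.algHom_ext_of_restrictionIso e hHher
    (fun v hv => by simp [hψP, e.extend_objMap_of_mem _ hv]) hq
    (fun v' => by simp [hψP, hπP]) (fun f' => by simp [hψS, hπS])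
    (fun f' => by simp [hψSstar, hπSstar])
  have hIψ : I ≤ TwoSidedIdeal.ker ψ := F.le_ker_of_isBasicIdeal_of_isGradedIdeal hIb hIgr hrf ψ
    fun f hf => by rw [hψS, RestrictionIso.extendFamily_S, e.extend_morMap_of_s_mem _ hf]
  set ψ' := I.ringCon.liftₐ ψ (TwoSidedIdeal.ringCon_le_iff.mp hIψ)
  have hψ'q : ∀ a, ψ' (q a) = ψ a := fun _ => rfl
  have hψ'π : ψ'.comp π = AlgHom.id R B := hBKP.algHom_ext
    (fun v' => by simp [hπP, hψ'q, hψP]) (fun f' => by simp [hπS, hψ'q, hψS])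
    (fun f' => by simp [hπSstar, hψ'q, hψSstar])
  refine ⟨ψ, fun b => ?_, fun a => ⟨fun ha => ?_, fun ha => (TwoSidedIdeal.mem_ker ψ).mp (hIψ ha)⟩,
    fun v' => by simp [hψP], fun f' => by simp [hψS], fun f' => by simp [hψSstar]⟩
  · obtain ⟨a, ha⟩ := RingCon.mkₐ_surjective (α := R) _ (π b)
    exact ⟨a, by rw [← hψ'q, ha]; exact congr($hψ'π b)⟩
  · rw [← I.mkₐ_ringCon_eq_zero_iff (R := R), ← DFunLike.congr_fun hπψ a, AlgHom.comp_apply, ha,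
      map_zero]

/-- For a basic graded ideal `I` of `KP_R(Λ)` there is an
isomorphism `π : KP_R(Λ \ H(I)) → KP_R(Λ)/I` with `π(q_v) = p_v + I`,
`π(t_λ) = m_λ + I` and `π(t_{μ*}) = m_{μ*} + I`.  This is expressed by a
surjective `R`-algebra homomorphism `ψ : KP_R(Λ) → KP_R(Λ \ H(I))` with kernel
`I` (namely `ψ = π⁻¹ ∘ (quotient map)`) matching the two families. -/
theorem quotient_iso_of_basic_graded
    {k : ℕ} (Λ : KGraph k) (hrf : Λ.RowFinite) (hlc : Λ.LocallyConvex)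
    (R : Type) [CommRing R] (A : Type) [Ring A] [Algebra R A]
    (F : KPFamily Λ R A) (hA : IsKPAlgebra Λ R A F)
    (I : TwoSidedIdeal A) (hIb : F.IsBasicIdeal I) (hIgr : F.IsGradedIdeal I)
    (Λ' : KGraph k) (e : RestrictionIso Λ' Λ (F.HSet I))
    (B : Type) [Ring B] [Algebra R B]
    (G : KPFamily Λ' R B) (hBKP : IsKPAlgebra Λ' R B G) :
    ∃ ψ : A →ₐ[R] B, Function.Surjective ψ ∧ (∀ a : A, ψ a = 0 ↔ a ∈ I) ∧
      (∀ v : Λ'.Obj, ψ (F.P (e.objMap v)) = G.P v) ∧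
      (∀ f : Λ'.Mor, ψ (F.S (e.morMap f)) = G.S f) ∧
      (∀ f : Λ'.Mor, ψ (F.Sstar (e.morMap f)) = G.Sstar f) :=
  quotient_iso_of_basic_graded_general Λ hrf R A F hA I hIb hIgr Λ' e B G hBKP
end

section
/- Let Λ be a row-finite, locally-convex k-graph and let H ⊆ Λ^0 be saturated and hereditary. Then for every n ∈ ℕ^k, the set of paths (Λ \ H)^{≤n} computed in the quotient k-graph Λ \ H equals Λ^{≤n} \ {λ ∈ Λ : s(λ) ∈ H}. -/
open scoped BigOperators

/-- For a saturated hereditary `H ⊆ Λ⁰` and any `n ∈ ℕ^k`,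
`(Λ \ H)^{≤ n} = Λ^{≤ n} \ {λ : s(λ) ∈ H}`. -/
theorem pathsLeIn_eq_pathsLe_diff
    {k : ℕ} (Λ : KGraph k) (hrf : Λ.RowFinite) (hlc : Λ.LocallyConvex)
    (H : Set Λ.Obj) (hsat : Λ.Saturated H) (hher : Λ.Hereditary H)
    (n : Fin k → ℕ) :
    Λ.pathsLeIn H n = Λ.pathsLe n \ {f : Λ.Mor | Λ.s f ∈ H} := by
  ext f
  simp only [KGraph.pathsLeIn, KGraph.pathsLe, Set.mem_setOf_eq, Set.mem_diff,
    Set.mem_empty_iff_false, not_false_iff, true_and]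
  constructor
  · rintro ⟨hrH, hsH, hdn, hmin⟩
    refine ⟨⟨hdn, fun i hi => ?_⟩, hsH⟩
    rw [Set.eq_empty_iff_forall_notMem]
    rintro g ⟨hrg, hdg, -⟩
    -- use saturation at vertex `s f` with direction `i`
    apply hsH
    apply hsat (Λ.s f)
    refine ⟨i, fun h hh => ?_⟩
    obtain ⟨⟨-, -, hdle, hhmin⟩, hrh⟩ := hh
    by_cases hzero : Λ.d h i = 0
    · -- then d h = 0, so h = id, and s h has a degree-eᵢ path coming out, contradiction
      exfalso
      have hd0 : Λ.d h = 0 := by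
        funext j
        by_cases hji : j = i
        · subst hji; exact hzero
        · have := hdle j
          simpa [Pi.single_apply, hji] using this
      have hid := Λ.eq_id_of_d_eq_zero h hd0
      have hsh : Λ.s h = Λ.s f := by rw [hid, Λ.s_id, hrh]
      have hlt : Λ.d h i < (Pi.single i 1 : Fin k → ℕ) i := by simp [hzero]
      have := hhmin i hlt
      rw [Set.eq_empty_iff_forall_notMem] at this
      exact this g ⟨by rw [hrg, hsh], hdg, by simp⟩
    · -- then d h = eᵢ, so by `hmin` we get s h ∈ H
      have hdh : Λ.d h = Pi.single i 1 := by
        funext j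
        by_cases hji : j = i
        · subst hji
          have := hdle j
          simp only [Pi.single_eq_same] at this ⊢
          omega
        · have := hdle j
          simpa [Pi.single_apply, hji] using this
      have := hmin i hi
      rw [Set.eq_empty_iff_forall_notMem] at this
      by_contra hshH
      exact this h ⟨hrh, hdh, hshH⟩
  · rintro ⟨⟨hdn, hmin⟩, hsH⟩
    refine ⟨fun hrf => hsH (hher f hrf), hsH, hdn, fun i hi => ?_⟩
    rw [Set.eq_empty_iff_forall_notMem]
    rintro g ⟨hrg, hdg, -⟩
    have := hmin i hi
    rw [Set.eq_empty_iff_forall_notMem] at this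
    exact this g ⟨hrg, hdg, by simp⟩
end
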